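/- arXiv:1711.10178 — 3 statements merged into one kernel-verified Lean document; each statement's English description precedes it below -/
import Mathlib

section
/- For all natural numbers n, k and d ≥ 1, the number of n×k lonesum 01 matrices having no all-zero column and no all-zero row in which every row vector occurs at most d times among the n rows (with no restriction on column multiplicities) equals ∑_{m=0}^{min(n,k)} m! · S(n,m)_{≤d} · m! · S(k,m). -/
open Finset

/-- A 01 matrix (encoded with `Bool` entries) is lonesum iff it avoids the
two 2×2 permutation submatrices. -/
def Lonesum {n k : ℕ} (M : Fin n → Fin k → Bool) : Prop :=
  ∀ i i' : Fin n, ∀ j j' : Fin k, i < i' → j < j' →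
    ¬(M i j = true ∧ M i j' = false ∧ M i' j = false ∧ M i' j' = true) ∧
    ¬(M i j = false ∧ M i j' = true ∧ M i' j = true ∧ M i' j' = false)

/-- The `i`-th row of a 01 matrix. -/
def rowOf {n k : ℕ} (M : Fin n → Fin k → Bool) (i : Fin n) : Fin k → Bool :=
  fun j => M i j

/-- The restricted Stirling number of the second kind `S(n,m)_{≤ d}`. -/
noncomputable def restrictedStirling (n m d : ℕ) : ℕ :=
  Nat.card {P : Finpartition (univ : Finset (Fin n)) //
    P.parts.card = m ∧ ∀ b ∈ P.parts, b.card ≤ d}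

/-- The Stirling number of the second kind `S(n,m)`. -/
noncomputable def stirling (n m : ℕ) : ℕ :=
  Nat.card {P : Finpartition (univ : Finset (Fin n)) // P.parts.card = m}

/-! A lonesum matrix has its rows totally ordered by inclusion, since two incomparable rows
would contain one of the forbidden 2×2 patterns. If the matrix has no zero row or column and `m`
distinct rows, ranking its rows in this chain and counting, for each column, the rows that avoid
it writes it uniquely as the threshold matrix `M i j = [g j ≤ f i]` of a pair of surjections
`f : Fin n → Fin m`, `g : Fin k → Fin m`; the multiplicity of a row becomes the size of a fibre of
`f`. A surjection onto `Fin m` is a partition into `m` blocks together with a labelling of the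
blocks, so there are `m! S(n,m)_{≤d}` choices of `f` and `m! S(k,m)` choices of `g`. -/

open Function

theorem exists_equiv_comp_eq_of_ker_eq {α β γ : Type*} {q : α → γ} {f : α → β}
    (hq : Surjective q) (hf : Surjective f) (hker : ∀ x y, f x = f y ↔ q x = q y) :
    ∃ e : γ ≃ β, e ∘ q = f := by
  have hsec : ∀ x, f (surjInv hq (q x)) = f x := fun x => (hker _ _).2 (surjInv_eq hq _)
  refine ⟨Equiv.ofBijective (f ∘ surjInv hq) ⟨fun c c' h => ?_, fun b => ?_⟩, funext hsec⟩
  · rw [← surjInv_eq hq c, ← surjInv_eq hq c']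
    exact (hker _ _).1 h
  · obtain ⟨x, rfl⟩ := hf b
    exact ⟨q x, hsec x⟩

namespace Finpartition

variable {α : Type*} [Fintype α] [DecidableEq α] (P : Finpartition (univ : Finset α))

def toParts (x : α) : P.parts := ⟨P.part x, P.part_mem.2 (mem_univ x)⟩

theorem toParts_surjective : Surjective P.toParts := by
  rintro ⟨b, hb⟩
  obtain ⟨x, hx⟩ := P.nonempty_of_mem_parts hb
  exact ⟨x, Subtype.ext (P.part_eq_of_mem hb hx)⟩

theorem toParts_eq_toParts_iff {x y : α} : P.toParts x = P.toParts y ↔ P.part x = P.part y :=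
  Subtype.ext_iff

theorem forall_mem_parts_iff {p : Finset α → Prop} : (∀ b ∈ P.parts, p b) ↔ ∀ x, p (P.part x) :=
  Subtype.forall'.trans (P.toParts_surjective.forall (p := fun b => p b.1))

theorem eq_of_part_eq {Q : Finpartition (univ : Finset α)} (h : ∀ x, P.part x = Q.part x) :
    P = Q := by
  ext b
  refine ⟨fun hb => ?_, fun hb => ?_⟩
  · obtain ⟨x, hx⟩ := P.toParts_surjective ⟨b, hb⟩
    obtain rfl : P.part x = b := congrArg Subtype.val hx
    exact h x ▸ Q.part_mem.2 (mem_univ x)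
  · obtain ⟨x, hx⟩ := Q.toParts_surjective ⟨b, hb⟩
    obtain rfl : Q.part x = b := congrArg Subtype.val hx
    exact (h x).symm ▸ P.part_mem.2 (mem_univ x)

end Finpartition

section KerPartition

variable {α β : Type*} [Fintype α] [DecidableEq α] [DecidableEq β]

def kerPartition (f : α → β) : Finpartition (univ : Finset α) :=
  .ofSetoid (Setoid.ker f)

theorem part_kerPartition (f : α → β) (x : α) :
    (kerPartition f).part x = ({y | f y = f x} : Finset α) := by
  ext y
  rw [kerPartition, Finpartition.mem_part_ofSetoid_iff_rel, Setoid.ker_def, mem_filter, eq_comm]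
  simp

theorem kerPartition_eq_iff {f : α → β} {P : Finpartition (univ : Finset α)} :
    kerPartition f = P ↔ ∀ x y, f x = f y ↔ P.part x = P.part y := by
  have hpart : ∀ (Q : Finpartition (univ : Finset α)) x y, Q.part x = Q.part y ↔ x ∈ Q.part y :=
    fun Q x y => (Q.mem_part_iff_part_eq_part (mem_univ x) (mem_univ y)).symm
  constructor
  · rintro rfl x y
    rw [hpart, part_kerPartition, mem_filter]
    simp
  · intro h
    refine Finpartition.eq_of_part_eq _ fun x => ?_
    ext y
    rw [part_kerPartition, mem_filter, ← hpart, h]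
    simp

theorem card_surjective_kerPartition_eq (P : Finpartition (univ : Finset α)) :
    Nat.card {f : α → β // Surjective f ∧ kerPartition f = P} = Nat.card (P.parts ≃ β) := by
  have hker (e : P.parts ≃ β) : kerPartition (e ∘ P.toParts) = P :=
    kerPartition_eq_iff.2 fun x y => by
      rw [comp_apply, comp_apply, e.apply_eq_iff_eq, P.toParts_eq_toParts_iff]
  refine (Nat.card_eq_of_bijective (fun e => ⟨e ∘ P.toParts,
    e.surjective.comp P.toParts_surjective, hker e⟩) ⟨?_, ?_⟩).symm
  · intro e e' h
    exact Equiv.ext (congrFun (P.toParts_surjective.injective_comp_right (congrArg Subtype.val h)))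
  · rintro ⟨f, hf, hP⟩
    obtain ⟨e, he⟩ := exists_equiv_comp_eq_of_ker_eq P.toParts_surjective hf
      fun x y => (kerPartition_eq_iff.1 hP x y).trans P.toParts_eq_toParts_iff.symm
    exact ⟨e, Subtype.ext he⟩

variable [Fintype β]

theorem card_parts_kerPartition {f : α → β} (hf : Surjective f) :
    #(kerPartition f).parts = Fintype.card β := by
  obtain ⟨e, -⟩ := exists_equiv_comp_eq_of_ker_eq (kerPartition f).toParts_surjective hf
    fun x y => (kerPartition_eq_iff.1 rfl x y).trans (kerPartition f).toParts_eq_toParts_iff.symm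
  rw [← Fintype.card_coe, Fintype.card_congr e]

theorem card_surjective_kerPartition (p : Finpartition (univ : Finset α) → Prop) :
    Nat.card {f : α → β // Surjective f ∧ p (kerPartition f)} =
      (Fintype.card β).factorial *
        Nat.card {P : Finpartition (univ : Finset α) // #P.parts = Fintype.card β ∧ p P} := by
  classical
  simp only [Nat.card_eq_fintype_card, Fintype.card_subtype]
  rw [card_eq_sum_card_fiberwise (f := kerPartition)
    (t := {P | #P.parts = Fintype.card β ∧ p P}) fun f hf => by
      simp only [coe_filter, mem_univ, true_and, Set.mem_ofPred_eq] at hf ⊢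
      exact ⟨card_parts_kerPartition hf.1, hf.2⟩,
    mul_comm, ← smul_eq_mul, ← sum_const]
  refine sum_congr rfl fun P hP => ?_
  rw [mem_filter] at hP
  obtain ⟨-, hcard, hp⟩ := hP
  have e : P.parts ≃ β := Fintype.equivOfCardEq (by rw [Fintype.card_coe, hcard])
  rw [filter_filter, ← Fintype.card_congr e, ← Fintype.card_equiv e, ← Nat.card_eq_fintype_card,
    ← card_surjective_kerPartition_eq, Nat.card_eq_fintype_card, Fintype.card_subtype]
  exact congrArg card (filter_congr fun f _ =>
    ⟨fun h => ⟨h.1.1, h.2⟩, fun h => ⟨⟨h.1, h.2 ▸ hp⟩, h.2⟩⟩)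

end KerPartition

theorem card_surjective_card_fiber_le (n m d : ℕ) :
    Nat.card {f : Fin n → Fin m // Surjective f ∧ ∀ x, #{y | f y = f x} ≤ d} =
      m.factorial * restrictedStirling n m d := by
  have h := card_surjective_kerPartition (α := Fin n) (β := Fin m)
    fun P => ∀ b ∈ P.parts, #b ≤ d
  rw [Fintype.card_fin] at h
  rw [restrictedStirling, ← h]
  refine Nat.card_congr (Equiv.subtypeEquivRight fun f => and_congr_right fun _ => ?_)
  rw [Finpartition.forall_mem_parts_iff]
  simp only [part_kerPartition]

theorem card_surjective (k m : ℕ) :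
    Nat.card {g : Fin k → Fin m // Surjective g} = m.factorial * stirling k m := by
  have h := card_surjective_kerPartition (α := Fin k) (β := Fin m) fun _ => True
  simp only [and_true, Fintype.card_fin] at h
  rw [stirling, h]

theorem IsChain.card_filter_not_le_card_filter_lt_iff {α : Type*} [PartialOrder α]
    [DecidableLT α] {𝒞 : Finset α} (h𝒞 : IsChain (· ≤ ·) (𝒞 : Set α)) {p : α → Prop}
    [DecidablePred p] (hp : Monotone p) {A : α} (hA : A ∈ 𝒞) :
    #{B ∈ 𝒞 | ¬p B} ≤ #{B ∈ 𝒞 | B < A} ↔ p A := by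
  constructor
  · intro hle
    by_contra hpA
    have hsub : {B ∈ 𝒞 | B < A} ⊂ {B ∈ 𝒞 | ¬p B} := by
      refine (ssubset_iff_of_subset (monotone_filter_right _ fun B _ hBA hpB => ?_)).2
        ⟨A, mem_filter.2 ⟨hA, hpA⟩, fun h => lt_irrefl A (mem_filter.1 h).2⟩
      exact hpA (hp hBA.le hpB)
    exact (card_lt_card hsub).not_ge hle
  · intro hpA
    refine card_le_card (monotone_filter_right _ fun B hB hpB => ?_)
    rcases h𝒞.total hB hA with hBA | hAB
    · exact hBA.lt_of_ne fun h => hpB (h ▸ hpA)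
    · exact absurd (hp hAB hpA) hpB

section Threshold

variable {ι κ : Type*} {m : ℕ}

def thresholdRow (g : κ → Fin m) (v : Fin m) : κ → Bool := fun j => decide (g j ≤ v)

def thresholdMatrix (f : ι → Fin m) (g : κ → Fin m) : ι → κ → Bool := fun i => thresholdRow g (f i)

variable {f : ι → Fin m} {g : κ → Fin m}

theorem thresholdMatrix_apply {i : ι} {j : κ} : thresholdMatrix f g i j = true ↔ g j ≤ f i :=
  decide_eq_true_iff

theorem thresholdRow_strictMono (hg : Surjective g) : StrictMono (thresholdRow g) := by
  refine fun v w hvw => lt_of_le_of_ne (fun j => ?_) fun h => ?_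
  · simpa [thresholdRow, Bool.le_iff_imp] using fun h => h.trans hvw.le
  · obtain ⟨j, hj⟩ := hg w
    have hwv : w ≤ v := by simpa [thresholdRow, hj] using congrFun h j
    exact hvw.not_ge hwv

theorem lonesum_thresholdMatrix {n k : ℕ} (f : Fin n → Fin m) (g : Fin k → Fin m) :
    Lonesum (thresholdMatrix f g) := by
  intro i i' j j' _ _
  simp only [← Bool.not_eq_true, thresholdMatrix_apply, not_le]
  constructor
  · rintro ⟨h1, h2, h3, h4⟩
    exact lt_irrefl _ ((h1.trans_lt h2).trans_le h4 |>.trans h3)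
  · rintro ⟨h1, h2, h3, h4⟩
    exact lt_irrefl _ ((h3.trans_lt h4).trans_le h2 |>.trans h1)

theorem StrictMono.card_filter_image_lt {α : Type*} [PartialOrder α] [DecidableEq α]
    [DecidableLT α] {φ : Fin m → α} (hφ : StrictMono φ) (v : Fin m) :
    #{B ∈ univ.image φ | B < φ v} = v := by
  rw [filter_image, card_image_of_injective _ hφ.injective]
  simp only [hφ.lt_iff_lt, filter_gt_eq_Iio, Fin.card_Iio]

theorem card_filter_image_thresholdRow_eq_false [Fintype κ] (hg : Surjective g) (j : κ) :
    #{B ∈ univ.image (thresholdRow g) | B j = false} = g j := by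
  rw [filter_image, card_image_of_injective _ (thresholdRow_strictMono hg).injective]
  simp only [thresholdRow, decide_eq_false_iff_not, not_le, filter_gt_eq_Iio, Fin.card_Iio]

variable [Fintype ι] [Fintype κ]

theorem image_thresholdMatrix (hf : Surjective f) :
    univ.image (thresholdMatrix f g) = univ.image (thresholdRow g) := by
  rw [show thresholdMatrix f g = thresholdRow g ∘ f from rfl, ← image_image,
    image_univ_of_surjective hf]

theorem card_image_thresholdMatrix (hf : Surjective f) (hg : Surjective g) :
    #(univ.image (thresholdMatrix f g)) = m := by
  rw [image_thresholdMatrix hf, card_image_of_injective _ (thresholdRow_strictMono hg).injective,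
    card_univ, Fintype.card_fin]

theorem thresholdMatrix_injective {f' : ι → Fin m} {g' : κ → Fin m} (hf : Surjective f)
    (hg : Surjective g) (hf' : Surjective f') (hg' : Surjective g')
    (h : thresholdMatrix f g = thresholdMatrix f' g') : f = f' ∧ g = g' := by
  classical
  have hrows : univ.image (thresholdRow g) = univ.image (thresholdRow g') := by
    rw [← image_thresholdMatrix hf, ← image_thresholdMatrix hf', h]
  refine ⟨funext fun i => Fin.ext ?_, funext fun j => Fin.ext ?_⟩
  · rw [← (thresholdRow_strictMono hg).card_filter_image_lt (f i),
      ← (thresholdRow_strictMono hg').card_filter_image_lt (f' i), hrows]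
    exact congrArg (fun A => #{B ∈ univ.image (thresholdRow g') | B < A}) (congrFun h i)
  · rw [← card_filter_image_thresholdRow_eq_false hg j,
      ← card_filter_image_thresholdRow_eq_false hg' j, hrows]

theorem surjective_of_card_image_thresholdMatrix
    (hrow : ∀ i, ∃ j, thresholdMatrix f g i j = true)
    (hm : #(univ.image (thresholdMatrix f g)) = m) : Surjective f ∧ Surjective g := by
  have hf : Surjective f := by
    have himage : univ.image f = univ := by
      refine eq_univ_of_card _ (le_antisymm (card_le_univ _) ?_)
      calc Fintype.card (Fin m) = #(univ.image (thresholdMatrix f g)) := by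
            rw [Fintype.card_fin, hm]
        _ = #((univ.image f).image (thresholdRow g)) := by rw [image_image]; rfl
        _ ≤ #(univ.image f) := card_image_le
    intro v
    obtain ⟨i, -, hi⟩ := mem_image.1 (himage.symm ▸ mem_univ v)
    exact ⟨i, hi⟩
  have hinj : Injective (thresholdRow g) := by
    rw [← Set.injOn_univ, ← coe_univ, ← card_image_iff, ← image_thresholdMatrix hf, hm,
      card_univ, Fintype.card_fin]
  refine ⟨hf, fun v => ?_⟩
  obtain ⟨i, rfl⟩ := hf v
  obtain ⟨j, hj, hmax⟩ := exists_max_image {j | g j ≤ f i} g <| by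
    obtain ⟨j, hj⟩ := hrow i
    exact ⟨j, mem_filter.2 ⟨mem_univ j, thresholdMatrix_apply.1 hj⟩⟩
  refine ⟨j, hinj (funext fun j' => Bool.decide_congr ⟨fun h => h.trans ?_, fun h => hmax j' ?_⟩)⟩
  · exact (mem_filter.1 hj).2
  · exact mem_filter.2 ⟨mem_univ j', h⟩

end Threshold

theorem exists_thresholdMatrix_eq {ι κ : Type*} [Fintype ι] [Fintype κ] {m : ℕ}
    {M : ι → κ → Bool} (hM : IsChain (· ≤ ·) (Set.range M)) (hcol : ∀ j, ∃ i, M i j = true)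
    (hrow : ∀ i, ∃ j, M i j = true) (hm : #(univ.image M) = m) :
    ∃ f : ι → Fin m, ∃ g : κ → Fin m, Surjective f ∧ Surjective g ∧ thresholdMatrix f g = M := by
  classical
  subst hm
  set 𝒞 := univ.image M
  have h𝒞 : IsChain (· ≤ ·) (𝒞 : Set (κ → Bool)) := by simpa [𝒞] using hM
  have hmem (i : ι) : M i ∈ 𝒞 := mem_image_of_mem M (mem_univ i)
  let f (i : ι) : Fin #𝒞 :=
    ⟨#{B ∈ 𝒞 | B < M i}, card_lt_card (filter_ssubset.2 ⟨M i, hmem i, lt_irrefl _⟩)⟩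
  let g (j : κ) : Fin #𝒞 :=
    ⟨#{B ∈ 𝒞 | ¬B j = true}, card_lt_card (filter_ssubset.2 <| by
      obtain ⟨i, hi⟩ := hcol j
      exact ⟨M i, hmem i, not_not.2 hi⟩)⟩
  have hfg : thresholdMatrix f g = M := by
    funext i j
    rw [Bool.eq_iff_iff, thresholdMatrix_apply, Fin.mk_le_mk]
    exact h𝒞.card_filter_not_le_card_filter_lt_iff (p := fun B => B j = true)
      (fun A B hAB => Bool.le_iff_imp.1 (hAB j)) (hmem i)
  obtain ⟨hf, hg⟩ := surjective_of_card_image_thresholdMatrix (hfg ▸ hrow) (by rw [hfg])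
  exact ⟨f, g, hf, hg, hfg⟩

theorem Lonesum.isChain {n k : ℕ} {M : Fin n → Fin k → Bool} (hM : Lonesum M) :
    IsChain (· ≤ ·) (Set.range M) := by
  have hlt : ∀ i i', i < i' → M i ≤ M i' ∨ M i' ≤ M i := by
    intro i i' hii
    by_contra! h
    simp only [Pi.le_def, Bool.le_iff_imp, not_forall, Bool.not_eq_true, exists_prop] at h
    obtain ⟨⟨j, hij, hi'j⟩, ⟨j', hi'j', hij'⟩⟩ := h
    rcases lt_trichotomy j j' with hjj | rfl | hjj
    · exact (hM i i' j j' hii hjj).1 ⟨hij, hij', hi'j, hi'j'⟩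
    · exact Bool.false_ne_true (hi'j.symm.trans hi'j')
    · exact (hM i i' j' j hii hjj).2 ⟨hij', hij, hi'j', hi'j⟩
  rintro _ ⟨i, rfl⟩ _ ⟨i', rfl⟩ hne
  rcases lt_trichotomy i i' with h | rfl | h
  · exact hlt i i' h
  · exact absurd rfl hne
  · exact (hlt i' i h).symm

theorem card_lonesum_card_image_eq (n k d m : ℕ) :
    Nat.card {M : Fin n → Fin k → Bool // (Lonesum M ∧
        (∀ j, ∃ i, M i j = true) ∧ (∀ i, ∃ j, M i j = true) ∧
        (∀ i, #{i' | rowOf M i' = rowOf M i} ≤ d)) ∧ #(univ.image M) = m} =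
      Nat.card {f : Fin n → Fin m // Surjective f ∧ ∀ x, #{y | f y = f x} ≤ d} *
        Nat.card {g : Fin k → Fin m // Surjective g} := by
  have hrows {f : Fin n → Fin m} {g : Fin k → Fin m} (hg : Surjective g) (i : Fin n) :
      #{i' | rowOf (thresholdMatrix f g) i' = rowOf (thresholdMatrix f g) i} =
        #{i' | f i' = f i} :=
    congrArg card (filter_congr fun i' _ => (thresholdRow_strictMono hg).injective.eq_iff)
  rw [← Nat.card_prod]
  refine (Nat.card_eq_of_bijective (fun p => ⟨thresholdMatrix p.1.1 p.2.1,
    ⟨lonesum_thresholdMatrix _ _,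
      fun j => (p.1.2.1 (p.2.1 j)).imp fun i hi => thresholdMatrix_apply.2 hi.ge,
      fun i => (p.2.2 (p.1.1 i)).imp fun j hj => thresholdMatrix_apply.2 hj.le,
      fun i => hrows p.2.2 i ▸ p.1.2.2 i⟩,
    card_image_thresholdMatrix p.1.2.1 p.2.2⟩) ⟨?_, ?_⟩).symm
  · rintro ⟨⟨f, hf, _⟩, g, hg⟩ ⟨⟨f', hf', _⟩, g', hg'⟩ h
    obtain ⟨rfl, rfl⟩ := thresholdMatrix_injective hf hg hf' hg' (congrArg Subtype.val h)
    rfl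
  · rintro ⟨M, ⟨hL, hcol, hrow, hd⟩, hm⟩
    obtain ⟨f, g, hf, hg, rfl⟩ := exists_thresholdMatrix_eq hL.isChain hcol hrow hm
    exact ⟨⟨⟨f, hf, fun i => hrows hg i ▸ hd i⟩, ⟨g, hg⟩⟩, rfl⟩

theorem card_lonesum_row_restricted_general (n k d : ℕ) :
    Nat.card {M : Fin n → Fin k → Bool // Lonesum M ∧
        (∀ j, ∃ i, M i j = true) ∧ (∀ i, ∃ j, M i j = true) ∧
        (∀ i, (univ.filter fun i' => rowOf M i' = rowOf M i).card ≤ d)} =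
      ∑ m ∈ Finset.range (min n k + 1),
        m.factorial * restrictedStirling n m d * (m.factorial * stirling k m) := by
  classical
  have hbound {M : Fin n → Fin k → Bool} (hL : Lonesum M) (hcol : ∀ j, ∃ i, M i j = true)
      (hrow : ∀ i, ∃ j, M i j = true) : #(univ.image M) ≤ min n k := by
    obtain ⟨f, g, hf, hg, -⟩ := exists_thresholdMatrix_eq hL.isChain hcol hrow rfl
    simpa using le_min (Fintype.card_le_of_surjective f hf) (Fintype.card_le_of_surjective g hg)
  rw [Nat.card_eq_fintype_card, Fintype.card_subtype,
    card_eq_sum_card_fiberwise (f := fun M => #(univ.image M)) (t := range (min n k + 1))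
      fun M hM => by
        obtain ⟨-, hL, hcol, hrow, -⟩ := mem_filter.1 hM
        exact mem_range.2 (Nat.lt_succ_of_le (hbound hL hcol hrow))]
  refine sum_congr rfl fun m _ => ?_
  rw [filter_filter, ← Fintype.card_subtype, ← Nat.card_eq_fintype_card,
    card_lonesum_card_image_eq, card_surjective_card_fiber_le, card_surjective]

/-- The number of `n × k` lonesum 01 matrices with no all-zero column and no
all-zero row in which every row vector occurs at most `d` times among the rows
(no restriction on column multiplicities) equals
`∑_{m=0}^{min(n,k)} m!·S(n,m)_{≤d}·m!·S(k,m)`. -/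
theorem card_lonesum_row_restricted (n k d : ℕ) (hd : 1 ≤ d) :
    Nat.card {M : Fin n → Fin k → Bool // Lonesum M ∧
        (∀ j, ∃ i, M i j = true) ∧ (∀ i, ∃ j, M i j = true) ∧
        (∀ i, (univ.filter fun i' => rowOf M i' = rowOf M i).card ≤ d)} =
      ∑ m ∈ Finset.range (min n k + 1),
        m.factorial * restrictedStirling n m d * (m.factorial * stirling k m) :=
  card_lonesum_row_restricted_general n k d
end

section
/- Let d ≥ 1 and let M be an n×k lonesum 01 matrix with no all-zero column and no all-zero row. Let c_1, …, c_m be the distinct column vectors of M ordered by strictly increasing weight, let r_1, …, r_m be the distinct row vectors of M ordered by strictly increasing weight (these two lists have the same length m), and set c_0 (resp. r_0) to be the all-zero vector. Then every column vector of M occurs at most d times among the k columns and every row vector of M occurs at most d times among the n rows if and only if w(c_{i+1}) − w(c_i) ≤ d for all i = 0, 1, …, m−1 and w(r_{i+1}) − w(r_i) ≤ d for all i = 0, 1, …, m−1. -/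
open Finset

/-- The weight of a 01 vector: the number of its entries equal to 1. -/
def weight {n : ℕ} (v : Fin n → Bool) : ℕ :=
  (univ.filter fun i => v i = true).card

/-- The `j`-th column of a 01 matrix. -/
def colOf {n k : ℕ} (M : Fin n → Fin k → Bool) (j : Fin k) : Fin n → Bool :=
  fun i => M i j

/-!
The columns of a lonesum matrix are nested, so `c` is pointwise monotone and every row `i` is cut
out by a threshold: `M i j = 1` iff column `j` lies in one of the top `b` column classes. Thus each
row weight is `F b`, the number of columns in the top `b` classes, and `F` is monotone in `b`. The
rows listed by strictly increasing weight must therefore have thresholds `0, 1, …, m` in this order,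
so `w(r (s+1)) − w(r s) = F (s+1) − F s` is the multiplicity of the column `c (m − s)`. Applied to
`M` and to its transpose, this identifies both sides of the equivalence.
-/

section

variable {n k m : ℕ}

theorem weight_le_weight {v w : Fin n → Bool} (h : v ≤ w) : weight v ≤ weight w :=
  card_le_card <| monotone_filter_right _ fun x _ hx => Bool.le_iff_imp.mp (h x) hx

theorem exists_rev_lt_iff_of_monotone {φ : Fin (m + 1) → Bool} (hφ : Monotone φ)
    (h0 : φ 0 = false) : ∃ b : Fin (m + 1), ∀ t, φ t = true ↔ t.rev < b := by
  by_cases h : ∃ t, φ t = true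
  swap
  · simp only [not_exists, Bool.not_eq_true] at h
    exact ⟨0, fun t => by simp [h t]⟩
  obtain ⟨a, ha, hmin⟩ := wellFounded_lt.has_min {t | φ t = true} h
  obtain ⟨x, rfl⟩ := Fin.exists_succ_eq.2 (show a ≠ 0 by rintro rfl; simp_all)
  refine ⟨x.castSucc.rev, fun t => ?_⟩
  rw [Fin.rev_lt_rev, Fin.castSucc_lt_iff_succ_le]
  exact ⟨fun ht => not_lt.1 (hmin t ht), fun hxt => Bool.le_iff_imp.1 (hφ hxt) ha⟩

theorem card_filter_lt_succ_sub_card_filter_lt_castSucc {ι : Type*} [Fintype ι]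
    (f : ι → Fin (m + 1)) (i : Fin m) :
    #{j | f j < i.succ} - #{j | f j < i.castSucc} = #{j | f j = i.castSucc} := by
  classical
  have : #{j | f j < i.succ} = #{j | f j < i.castSucc} + #{j | f j = i.castSucc} := by
    rw [← card_union_of_disjoint (disjoint_filter.2 fun j _ h => h.ne), ← filter_or]
    simp_rw [← Fin.le_castSucc_iff, le_iff_lt_or_eq]
  omega

theorem eq_of_strictMono_of_range_subset {α β : Type*} [LinearOrder α] [Finite α] [Preorder β]
    {u F : α → β} (hF : Monotone F) (hu : StrictMono u) (h : Set.range u ⊆ Set.range F) :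
    u = F := by
  choose g hg using fun a => h ⟨a, rfl⟩
  have hg_id : g = id :=
    StrictMono.eq_id fun a b hab => hF.reflect_lt (by rw [hg, hg]; exact hu hab)
  funext a
  rw [← hg, hg_id, id]

structure IsWeightEnumeration (S : Set (Fin n → Bool)) (c : Fin (m + 1) → Fin n → Bool) :
    Prop where
  zero : c 0 = fun _ => false
  mem_iff : ∀ v, v ∈ S ↔ ∃ i ≠ 0, c i = v
  strictMono_weight : StrictMono (weight ∘ c)

namespace IsWeightEnumeration

variable {S : Set (Fin n → Bool)} {c : Fin (m + 1) → Fin n → Bool}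

theorem injective (hc : IsWeightEnumeration S c) : Function.Injective c :=
  hc.strictMono_weight.injective.of_comp

theorem monotone (hc : IsWeightEnumeration S c) (hS : IsChain (· ≤ ·) S) : Monotone c := by
  have zero_le : ∀ v, c 0 ≤ v := fun v x => hc.zero ▸ Bool.false_le (v x)
  have total : ∀ s t, c s ≤ c t ∨ c t ≤ c s := by
    intro s t
    rcases eq_or_ne s 0 with rfl | hs
    · exact .inl (zero_le _)
    rcases eq_or_ne t 0 with rfl | ht
    · exact .inr (zero_le _)
    exact hS.total ((hc.mem_iff _).2 ⟨s, hs, rfl⟩) ((hc.mem_iff _).2 ⟨t, ht, rfl⟩)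
  intro s t hst
  rcases total s t with h | hts
  · exact h
  · rw [le_antisymm hst (hc.strictMono_weight.le_iff_le.mp (weight_le_weight hts))]

end IsWeightEnumeration

namespace Lonesum

variable {M : Fin n → Fin k → Bool}

theorem transpose (hM : Lonesum M) : Lonesum fun j i => M i j :=
  fun j j' i i' hj hi =>
    ⟨fun ⟨h₁, h₂, h₃, h₄⟩ => (hM i i' j j' hi hj).1 ⟨h₁, h₃, h₂, h₄⟩,
      fun ⟨h₁, h₂, h₃, h₄⟩ => (hM i i' j j' hi hj).2 ⟨h₁, h₃, h₂, h₄⟩⟩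

theorem false_of_crossing (hM : Lonesum M) {i i' : Fin n} {j j' : Fin k} (h₁ : M i j = true)
    (h₂ : M i j' = false) (h₃ : M i' j = false) (h₄ : M i' j' = true) : False := by
  rcases lt_trichotomy i i' with hi | rfl | hi
  · rcases lt_trichotomy j j' with hj | rfl | hj
    · exact (hM i i' j j' hi hj).1 ⟨h₁, h₂, h₃, h₄⟩
    · simp_all
    · exact (hM i i' j' j hi hj).2 ⟨h₂, h₁, h₄, h₃⟩
  · simp_all
  · rcases lt_trichotomy j j' with hj | rfl | hj
    · exact (hM i' i j j' hi hj).2 ⟨h₃, h₄, h₁, h₂⟩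
    · simp_all
    · exact (hM i' i j' j hi hj).1 ⟨h₄, h₃, h₂, h₁⟩

theorem isChain_range_colOf (hM : Lonesum M) : IsChain (· ≤ ·) (Set.range (colOf M)) := by
  rintro _ ⟨j, rfl⟩ _ ⟨j', rfl⟩ -
  by_contra! h
  simp only [Pi.le_def, not_forall, not_le, Bool.lt_iff, colOf] at h
  obtain ⟨⟨i, hij', hij⟩, i', hi'j, hi'j'⟩ := h
  exact hM.false_of_crossing hij hij' hi'j hi'j'

variable {c : Fin (m + 1) → Fin n → Bool} {r : Fin (m + 1) → Fin k → Bool}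

theorem weight_succ_sub_weight_castSucc (hM : Lonesum M)
    (hc : IsWeightEnumeration (Set.range (colOf M)) c)
    (hr : IsWeightEnumeration (Set.range (rowOf M)) r) (i : Fin m) :
    weight (r i.succ) - weight (r i.castSucc) = #{j | colOf M j = c i.rev.succ} := by
  choose τ hτ using fun j => (hc.mem_iff (colOf M j)).1 ⟨j, rfl⟩
  -- `(τ j).rev < b`: column `j` lies in one of the top `b` column classes.
  set F : Fin (m + 1) → ℕ := fun b => #{j | (τ j).rev < b}
  have hF : Monotone F := fun b b' h =>
    card_le_card <| monotone_filter_right _ fun j _ hj => lt_of_lt_of_le hj h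
  have weight_rowOf : ∀ i, ∃ b, weight (rowOf M i) = F b := by
    intro i
    obtain ⟨b, hb⟩ := exists_rev_lt_iff_of_monotone
      (fun s t h => hc.monotone hM.isChain_range_colOf h i) (congrFun hc.zero i)
    refine ⟨b, congrArg card (filter_congr fun j _ => ?_)⟩
    rw [← hb, (hτ j).2]
    rfl
  have weight_r : ∀ s, weight (r s) = F s := by
    refine congrFun (eq_of_strictMono_of_range_subset hF hr.strictMono_weight ?_)
    rintro _ ⟨s, rfl⟩
    rcases eq_or_ne s 0 with rfl | hs
    · exact ⟨0, by simp [F, hr.zero, weight]⟩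
    · obtain ⟨i, hi⟩ := (hr.mem_iff _).2 ⟨s, hs, rfl⟩
      obtain ⟨b, hb⟩ := weight_rowOf i
      exact ⟨b, by simp [← hi, hb]⟩
  rw [weight_r, weight_r, card_filter_lt_succ_sub_card_filter_lt_castSucc]
  refine congrArg card (filter_congr fun j _ => ?_)
  rw [← (hτ j).2, hc.injective.eq_iff, ← Fin.rev_castSucc, Fin.rev_eq_iff]

theorem card_colOf_le_iff (hM : Lonesum M) (hc : IsWeightEnumeration (Set.range (colOf M)) c)
    (hr : IsWeightEnumeration (Set.range (rowOf M)) r) {d : ℕ} :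
    (∀ j, #{j' | colOf M j' = colOf M j} ≤ d) ↔
      ∀ i : Fin m, weight (r i.succ) - weight (r i.castSucc) ≤ d := by
  simp_rw [hM.weight_succ_sub_weight_castSucc hc hr]
  constructor
  · intro h i
    obtain ⟨j, hj⟩ := (hc.mem_iff _).2 ⟨i.rev.succ, i.rev.succ_ne_zero, rfl⟩
    exact hj ▸ h j
  · intro h j
    obtain ⟨t, ht, htj⟩ := (hc.mem_iff _).1 ⟨j, rfl⟩
    obtain ⟨x, rfl⟩ := Fin.exists_succ_eq.2 ht
    simpa [htj] using h x.rev

end Lonesum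

end

theorem lonesum_multiplicity_iff_weight_gaps_general {n k m d : ℕ}
    (M : Fin n → Fin k → Bool) (hM : Lonesum M)
    (c : Fin (m + 1) → Fin n → Bool) (r : Fin (m + 1) → Fin k → Bool)
    (hc0 : c 0 = fun _ => false) (hr0 : r 0 = fun _ => false)
    (hcdistinct : ∀ v : Fin n → Bool,
      (∃ j, colOf M j = v) ↔ ∃ i : Fin (m + 1), i ≠ 0 ∧ c i = v)
    (hrdistinct : ∀ v : Fin k → Bool,
      (∃ i, rowOf M i = v) ↔ ∃ i : Fin (m + 1), i ≠ 0 ∧ r i = v)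
    (hcmono : ∀ i i' : Fin (m + 1), i < i' → weight (c i) < weight (c i'))
    (hrmono : ∀ i i' : Fin (m + 1), i < i' → weight (r i) < weight (r i')) :
    ((∀ j, (univ.filter fun j' => colOf M j' = colOf M j).card ≤ d) ∧
        (∀ i, (univ.filter fun i' => rowOf M i' = rowOf M i).card ≤ d)) ↔
      ((∀ i : Fin m, weight (c i.succ) - weight (c i.castSucc) ≤ d) ∧
        (∀ i : Fin m, weight (r i.succ) - weight (r i.castSucc) ≤ d)) := by
  have hc : IsWeightEnumeration (Set.range (colOf M)) c := ⟨hc0, hcdistinct, hcmono⟩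
  have hr : IsWeightEnumeration (Set.range (rowOf M)) r := ⟨hr0, hrdistinct, hrmono⟩
  exact ((hM.card_colOf_le_iff hc hr).and (hM.transpose.card_colOf_le_iff hr hc)).trans and_comm

/-- Let `M` be an `n × k` lonesum matrix with no all-zero column or row, let
`c 1 < … < c m` be its distinct column vectors ordered by strictly increasing
weight and `r 1 < … < r m` its distinct row vectors ordered by strictly
increasing weight, with `c 0` and `r 0` the all-zero vectors.  Then every
column occurs at most `d` times and every row occurs at most `d` times iff all
consecutive weight differences `w(c (i+1)) − w(c i)` and
`w(r (i+1)) − w(r i)` are at most `d`. -/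
theorem lonesum_multiplicity_iff_weight_gaps {n k m d : ℕ} (hd : 1 ≤ d)
    (M : Fin n → Fin k → Bool) (hM : Lonesum M)
    (hnocolzero : ∀ j, ∃ i, M i j = true) (hnorowzero : ∀ i, ∃ j, M i j = true)
    (c : Fin (m + 1) → Fin n → Bool) (r : Fin (m + 1) → Fin k → Bool)
    (hc0 : c 0 = fun _ => false) (hr0 : r 0 = fun _ => false)
    (hcdistinct : ∀ v : Fin n → Bool,
      (∃ j, colOf M j = v) ↔ ∃ i : Fin (m + 1), i ≠ 0 ∧ c i = v)
    (hrdistinct : ∀ v : Fin k → Bool,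
      (∃ i, rowOf M i = v) ↔ ∃ i : Fin (m + 1), i ≠ 0 ∧ r i = v)
    (hcmono : ∀ i i' : Fin (m + 1), i < i' → weight (c i) < weight (c i'))
    (hrmono : ∀ i i' : Fin (m + 1), i < i' → weight (r i) < weight (r i')) :
    ((∀ j, (univ.filter fun j' => colOf M j' = colOf M j).card ≤ d) ∧
        (∀ i, (univ.filter fun i' => rowOf M i' = rowOf M i).card ≤ d)) ↔
      ((∀ i : Fin m, weight (c i.succ) - weight (c i.castSucc) ≤ d) ∧
        (∀ i : Fin m, weight (r i.succ) - weight (r i.castSucc) ≤ d)) :=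
  lonesum_multiplicity_iff_weight_gaps_general M hM c r hc0 hr0 hcdistinct hrdistinct hcmono hrmono
end

section
/- For d = 1: the number of n×n lonesum 01 matrices with no all-zero column and no all-zero row in which all n columns are pairwise distinct and all n rows are pairwise distinct equals (n!)². Moreover, for n ≠ k there is no such n×k matrix, i.e., pB(n,k)_{≤1} = (n!)² if n = k and pB(n,k)_{≤1} = 0 otherwise. -/
open Finset

/-- `pB(n,k)_{≤d}`: the number of `n × k` lonesum 01 matrices with no all-zero
column and no all-zero row, in which every column vector occurs at most `d`
times among the columns and every row vector occurs at most `d` times among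
the rows. -/
noncomputable def pB (n k d : ℕ) : ℕ :=
  Nat.card {M : Fin n → Fin k → Bool // Lonesum M ∧
    (∀ j, ∃ i, M i j = true) ∧ (∀ i, ∃ j, M i j = true) ∧
    (∀ j, (univ.filter fun j' => colOf M j' = colOf M j).card ≤ d) ∧
    (∀ i, (univ.filter fun i' => rowOf M i' = rowOf M i).card ≤ d)}

/-!
The column supports of a lonesum matrix form a chain under inclusion, and so do its row supports
(the transpose is again lonesum). In `L_{≤1}(n,k)` the columns are distinct and nonzero, so their
sizes are distinct numbers in `[1, n]`; hence `k ≤ n`, and symmetrically `n ≤ k`. When `n = k` the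
column sizes `c` and the row sizes `r` are both permutations of `[1, n]`, and the chain property
forces `M i j = 1 ↔ n < r i + c j`. Conversely, every pair of permutations defines such a matrix,
so `L_{≤1}(n,n)` is in bijection with pairs of permutations of `Fin n`.
-/

open Function

theorem card_filter_eq_le_one_iff_injective {α β : Type*} [Fintype α] [DecidableEq β]
    {f : α → β} : (∀ a, #{a' | f a' = f a} ≤ 1) ↔ Injective f := by
  refine ⟨fun h a b hab => card_le_one.mp (h b) a (by simp [hab]) b (by simp), fun hf a => ?_⟩
  exact card_le_one.mpr fun b hb c hc => hf <| by simp_all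

theorem Equiv.Perm.card_filter_le_apply {n : ℕ} (σ : Equiv.Perm (Fin n)) (a : Fin n) :
    #{j | a ≤ σ j} = n - a := by
  rw [← Fin.card_Ici]
  exact card_equiv σ (by simp)

theorem Equiv.Perm.card_filter_lt_apply {n : ℕ} (σ : Equiv.Perm (Fin n)) (a : Fin n) :
    #{j | a < σ j} = n - 1 - a := by
  rw [← Fin.card_Ioi]
  exact card_equiv σ (by simp)

section Support

variable {m n k : ℕ}

def colSupport (M : Fin n → Fin k → Bool) (j : Fin k) : Finset (Fin n) := {i | M i j = true}

def rowSupport (M : Fin n → Fin k → Bool) (i : Fin n) : Finset (Fin k) := {j | M i j = true}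

@[simp]
theorem mem_colSupport {M : Fin n → Fin k → Bool} {i : Fin n} {j : Fin k} :
    i ∈ colSupport M j ↔ M i j = true := by
  simp [colSupport]

@[simp]
theorem mem_rowSupport {M : Fin n → Fin k → Bool} {i : Fin n} {j : Fin k} :
    j ∈ rowSupport M i ↔ M i j = true := by
  simp [rowSupport]

theorem colSupport_swap (M : Fin n → Fin k → Bool) : colSupport (swap M) = rowSupport M := rfl

theorem colOf_swap (M : Fin n → Fin k → Bool) : colOf (swap M) = rowOf M := rfl

theorem colOf_eq_iff_colSupport_eq {M : Fin n → Fin k → Bool} {j j' : Fin k} :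
    colOf M j = colOf M j' ↔ colSupport M j = colSupport M j' := by
  simp only [funext_iff, Finset.ext_iff, colOf, mem_colSupport]
  exact forall_congr' fun _ => Bool.eq_iff_iff

theorem card_colSupport_pos {M : Fin n → Fin k → Bool} {j : Fin k} :
    0 < #(colSupport M j) ↔ ∃ i, M i j = true := by
  simp [card_pos, Finset.Nonempty]

theorem Lonesum.swap {M : Fin n → Fin k → Bool} (hM : Lonesum M) : Lonesum (swap M) := by
  intro j j' i i' hj hi
  have := hM i i' j j' hi hj
  simp only [Function.swap]
  tauto

theorem Lonesum.colSupport_total {M : Fin n → Fin k → Bool} (hM : Lonesum M) (j j' : Fin k) :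
    colSupport M j ⊆ colSupport M j' ∨ colSupport M j' ⊆ colSupport M j := by
  by_contra! h
  obtain ⟨⟨i, hi, hi'⟩, ⟨i', hi'j', hi'j⟩⟩ := And.imp not_subset.mp not_subset.mp h
  simp only [mem_colSupport, Bool.not_eq_true] at hi hi' hi'j' hi'j
  have hii : i ≠ i' := by rintro rfl; simp_all
  have hjj : j ≠ j' := by rintro rfl; simp_all
  rcases hii.lt_or_gt with hii | hii <;> rcases hjj.lt_or_gt with hjj | hjj
  · exact (hM i i' j j' hii hjj).1 ⟨hi, hi', hi'j, hi'j'⟩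
  · exact (hM i i' j' j hii hjj).2 ⟨hi', hi, hi'j', hi'j⟩
  · exact (hM i' i j j' hii hjj).2 ⟨hi'j, hi'j', hi, hi'⟩
  · exact (hM i' i j' j hii hjj).1 ⟨hi'j', hi'j, hi', hi⟩

theorem Lonesum.colSupport_subset_of_card_le {M : Fin n → Fin k → Bool} (hM : Lonesum M)
    {j j' : Fin k} (h : #(colSupport M j) ≤ #(colSupport M j')) :
    colSupport M j ⊆ colSupport M j' := by
  rcases hM.colSupport_total j j' with hjj' | hj'j
  · exact hjj'
  · exact (eq_of_subset_of_card_le hj'j h).ge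

/-- Row `i` meets every column at least as large as one it meets and misses every column at
most as large as one it misses. -/
theorem Lonesum.apply_eq_true_iff {M : Fin m → Fin n → Bool} (hM : Lonesum M)
    {σ : Equiv.Perm (Fin n)} (hσ : ∀ j, #(colSupport M j) = σ j + 1) (i : Fin m) (j : Fin n) :
    M i j = true ↔ n ≤ #(rowSupport M i) + σ j := by
  have hσj := (σ j).isLt
  constructor
  · intro hij
    have hsub : ({j' | σ j ≤ σ j'} : Finset (Fin n)) ⊆ rowSupport M i := fun j' hj' => by
      have hle : σ j ≤ σ j' := by simpa using hj'
      simpa using hM.colSupport_subset_of_card_le (j := j) (j' := j') (by simp [hσ, hle])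
        (mem_colSupport.mpr hij)
    have := card_le_card hsub
    rw [σ.card_filter_le_apply] at this
    omega
  · contrapose!
    intro hij
    have hsub : rowSupport M i ⊆ ({j' | σ j < σ j'} : Finset (Fin n)) := fun j' hj' => by
      by_contra! hle
      have hle : σ j' ≤ σ j := by simpa using hle
      simpa [hij] using hM.colSupport_subset_of_card_le (j := j') (j' := j) (by simp [hσ, hle])
        (mem_colSupport.mpr (mem_rowSupport.mp hj'))
    have := card_le_card hsub
    rw [σ.card_filter_lt_apply] at this
    omega

end Support

/-- The matrices of `L_{≤1}(n,k)`. -/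
structure IsDistinctLonesum {n k : ℕ} (M : Fin n → Fin k → Bool) : Prop where
  lonesum : Lonesum M
  exists_col : ∀ j, ∃ i, M i j = true
  exists_row : ∀ i, ∃ j, M i j = true
  colOf_injective : Injective (colOf M)
  rowOf_injective : Injective (rowOf M)

theorem isDistinctLonesum_iff {n k : ℕ} {M : Fin n → Fin k → Bool} :
    IsDistinctLonesum M ↔ Lonesum M ∧
      (∀ j, ∃ i, M i j = true) ∧ (∀ i, ∃ j, M i j = true) ∧
      (∀ j, (univ.filter fun j' => colOf M j' = colOf M j).card ≤ 1) ∧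
      (∀ i, (univ.filter fun i' => rowOf M i' = rowOf M i).card ≤ 1) := by
  simp only [card_filter_eq_le_one_iff_injective]
  exact ⟨fun ⟨h₁, h₂, h₃, h₄, h₅⟩ => ⟨h₁, h₂, h₃, h₄, h₅⟩,
    fun ⟨h₁, h₂, h₃, h₄, h₅⟩ => ⟨h₁, h₂, h₃, h₄, h₅⟩⟩

namespace IsDistinctLonesum

variable {n k : ℕ} {M : Fin n → Fin k → Bool}

theorem swap (hM : IsDistinctLonesum M) : IsDistinctLonesum (swap M) :=
  ⟨hM.lonesum.swap, hM.exists_row, hM.exists_col, hM.rowOf_injective, hM.colOf_injective⟩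

/-- Distinct columns have distinct supports, which form a chain, so their sizes are distinct. -/
theorem exists_injective_colSupport_card (hM : IsDistinctLonesum M) :
    ∃ f : Fin k → Fin n, Injective f ∧ ∀ j, #(colSupport M j) = f j + 1 := by
  have hpos (j : Fin k) : 0 < #(colSupport M j) := card_colSupport_pos.mpr (hM.exists_col j)
  have hle (j : Fin k) : #(colSupport M j) ≤ n := card_le_univ _ |>.trans_eq (Fintype.card_fin n)
  refine ⟨fun j => ⟨#(colSupport M j) - 1, by grind⟩, fun j j' h => ?_, fun j => by grind⟩
  have hcard : #(colSupport M j) = #(colSupport M j') := by grind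
  exact hM.colOf_injective <| colOf_eq_iff_colSupport_eq.mpr <|
    (hM.lonesum.colSupport_subset_of_card_le hcard.le).antisymm
      (hM.lonesum.colSupport_subset_of_card_le hcard.ge)

theorem width_le_height (hM : IsDistinctLonesum M) : k ≤ n :=
  let ⟨_, hf, _⟩ := hM.exists_injective_colSupport_card
  Fin.le_of_injective _ hf

theorem height_eq_width (hM : IsDistinctLonesum M) : n = k :=
  le_antisymm hM.swap.width_le_height hM.width_le_height

theorem exists_perm_colSupport_card {M : Fin n → Fin n → Bool} (hM : IsDistinctLonesum M) :
    ∃ σ : Equiv.Perm (Fin n), ∀ j, #(colSupport M j) = σ j + 1 :=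
  let ⟨f, hf, hfM⟩ := hM.exists_injective_colSupport_card
  ⟨Equiv.ofBijective f (Finite.injective_iff_bijective.mp hf), hfM⟩

end IsDistinctLonesum

section Staircase

variable {n : ℕ}

/-- Up to permuting rows and columns, the matrix with ones on and below the antidiagonal. -/
def staircase (τ σ : Equiv.Perm (Fin n)) (i j : Fin n) : Bool :=
  decide (n ≤ τ i + σ j + 1)

theorem staircase_comm (τ σ : Equiv.Perm (Fin n)) (i j : Fin n) :
    staircase σ τ j i = staircase τ σ i j := by
  simp only [staircase, Nat.add_comm (σ j : ℕ)]

theorem swap_staircase (τ σ : Equiv.Perm (Fin n)) : swap (staircase τ σ) = staircase σ τ :=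
  funext₂ fun j i => (staircase_comm τ σ i j).symm

theorem lonesum_staircase (τ σ : Equiv.Perm (Fin n)) : Lonesum (staircase τ σ) := by
  intro i i' j j' _ _
  simp only [staircase, decide_eq_true_eq, decide_eq_false_iff_not]
  omega

theorem card_colSupport_staircase (τ σ : Equiv.Perm (Fin n)) (j : Fin n) :
    #(colSupport (staircase τ σ) j) = σ j + 1 := by
  have hσj := (σ j).isLt
  have : colSupport (staircase τ σ) j = ({i | (σ j).rev ≤ τ i} : Finset (Fin n)) := by
    ext i
    simp only [mem_colSupport, staircase, decide_eq_true_eq, mem_filter, mem_univ, true_and,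
      Fin.le_def, Fin.val_rev]
    omega
  rw [this, τ.card_filter_le_apply, Fin.val_rev]
  omega

theorem card_rowSupport_staircase (τ σ : Equiv.Perm (Fin n)) (i : Fin n) :
    #(rowSupport (staircase τ σ) i) = τ i + 1 := by
  rw [← colSupport_swap, swap_staircase, card_colSupport_staircase]

theorem isDistinctLonesum_staircase (τ σ : Equiv.Perm (Fin n)) :
    IsDistinctLonesum (staircase τ σ) := by
  have exists_col (τ σ : Equiv.Perm (Fin n)) (j : Fin n) : ∃ i, staircase τ σ i j = true :=
    card_colSupport_pos.mp ((card_colSupport_staircase τ σ j).trans_gt (Nat.succ_pos _))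
  have colOf_injective (τ σ : Equiv.Perm (Fin n)) : Injective (colOf (staircase τ σ)) :=
    fun j j' h => σ.injective <| Fin.ext <| by
      simpa [card_colSupport_staircase] using congr(#$(colOf_eq_iff_colSupport_eq.mp h))
  refine ⟨lonesum_staircase τ σ, exists_col τ σ, fun i => ?_, colOf_injective τ σ, ?_⟩
  · simpa only [staircase_comm] using exists_col σ τ i
  · rw [← colOf_swap, swap_staircase]
    exact colOf_injective σ τ

theorem staircase_injective : Injective (uncurry (staircase (n := n))) := by
  rintro ⟨τ, σ⟩ ⟨τ', σ'⟩ h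
  replace h : staircase τ σ = staircase τ' σ' := h
  have hτ : τ = τ' := Equiv.ext fun i => Fin.ext <| by
    simpa [card_rowSupport_staircase] using congr(#(rowSupport $h i))
  have hσ : σ = σ' := Equiv.ext fun j => Fin.ext <| by
    simpa [card_colSupport_staircase] using congr(#(colSupport $h j))
  rw [hτ, hσ]

end Staircase

theorem IsDistinctLonesum.exists_staircase_eq {n : ℕ} {M : Fin n → Fin n → Bool}
    (hM : IsDistinctLonesum M) : ∃ τ σ : Equiv.Perm (Fin n), staircase τ σ = M := by
  obtain ⟨σ, hσ⟩ := hM.exists_perm_colSupport_card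
  obtain ⟨τ, hτ⟩ := hM.swap.exists_perm_colSupport_card
  refine ⟨τ, σ, funext₂ fun i j => Bool.eq_iff_iff.mpr ?_⟩
  rw [hM.lonesum.apply_eq_true_iff hσ, ← colSupport_swap, hτ, staircase, decide_eq_true_iff]
  omega

noncomputable def staircaseEquiv (n : ℕ) :
    Equiv.Perm (Fin n) × Equiv.Perm (Fin n) ≃ {M : Fin n → Fin n → Bool // IsDistinctLonesum M} :=
  Equiv.ofBijective (fun p => ⟨staircase p.1 p.2, isDistinctLonesum_staircase p.1 p.2⟩)
    ⟨fun _ _ h => staircase_injective congr(Subtype.val $h), fun ⟨_, hM⟩ =>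
      let ⟨τ, σ, h⟩ := hM.exists_staircase_eq
      ⟨(τ, σ), Subtype.ext h⟩⟩

/-- For `d = 1`: `pB(n,n)_{≤1} = (n!)²`, and `pB(n,k)_{≤1} = 0` for `n ≠ k`. -/
theorem pB_d_eq_one (n k : ℕ) :
    pB n k 1 = if n = k then n.factorial ^ 2 else 0 := by
  rw [pB, ← Nat.card_congr (Equiv.subtypeEquivRight fun _ => isDistinctLonesum_iff)]
  split_ifs with h
  · subst h
    rw [← Nat.card_congr (staircaseEquiv n), Nat.card_prod, Nat.card_perm, Nat.card_fin, sq]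
  · have : IsEmpty {M : Fin n → Fin k → Bool // IsDistinctLonesum M} :=
      ⟨fun M => h M.2.height_eq_width⟩
    exact Nat.card_of_isEmpty
end
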